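/- In the two-shop Partition reduction with discounts d = T/2 at thresholds T/2 (instead of discount 1): the minimum achievable cost is 0 if and only if the Partition instance (A, ω) with total weight T admits a subset summing to T/2; otherwise the minimum cost is positive. -/

import Mathlib

/-!
If the two purchase totals are `x + y = T = 2h`, both reach the threshold `h` exactly when
`x = y = h`, so the two discounts add up to at most `T`, with equality precisely for a plan
whose first shop's books weigh `T/2`. Plans and subsets of `A` correspond via `A' ↦ (· ∈ A')`.
-/

section TwoShopDiscount

variable {h x y : ℕ}

lemma discount_sum_le (hxy : x + y = h + h) :
    (if h ≤ x then (h : ℤ) else 0) + (if h ≤ y then (h : ℤ) else 0) ≤ h + h := by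
  split_ifs <;> omega

lemma discount_sum_eq_iff (hxy : x + y = h + h) :
    (if h ≤ x then (h : ℤ) else 0) + (if h ≤ y then (h : ℤ) else 0) = h + h ↔ x = h := by
  split_ifs <;> omega

end TwoShopDiscount

namespace Finset

variable {α M : Type*} [AddCommMonoid M]

lemma sum_filter_eq_true_add_sum_filter_eq_false (A : Finset α) (ω : α → M) (f : α → Bool) :
    ∑ a ∈ A.filter (fun a => f a = true), ω a +
      ∑ a ∈ A.filter (fun a => f a = false), ω a = ∑ a ∈ A, ω a := by
  simpa using sum_filter_add_sum_filter_not A (fun a => f a = true) ω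

lemma exists_subset_sum_eq_iff_exists_bool (A : Finset α) (ω : α → M) (s : M) :
    (∃ A' ⊆ A, ∑ a ∈ A', ω a = s) ↔
      ∃ f : α → Bool, ∑ a ∈ A.filter (fun a => f a = true), ω a = s := by
  classical
  constructor
  · rintro ⟨A', hA', rfl⟩
    refine ⟨fun a => decide (a ∈ A'), ?_⟩
    simp only [decide_eq_true_eq, filter_mem_eq_inter, inter_eq_right.mpr hA']
  · rintro ⟨f, hf⟩
    exact ⟨_, filter_subset _ _, hf⟩

end Finset

theorem stmt_18 {α : Type*}
    (A : Finset α) (ω : α → ℕ) (T : ℕ) (hT : T = ∑ a ∈ A, ω a) (heven : Even T) :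
    let cost : (α → Bool) → ℤ := fun f =>
      (T : ℤ) -
        ((if T / 2 ≤ ∑ a ∈ A.filter (fun a => f a = true), ω a
            then ((T / 2 : ℕ) : ℤ) else 0) +
         (if T / 2 ≤ ∑ a ∈ A.filter (fun a => f a = false), ω a
            then ((T / 2 : ℕ) : ℤ) else 0))
    (∀ f, 0 ≤ cost f) ∧
      ((∃ A' ⊆ A, ∑ a ∈ A', ω a = T / 2) ↔ ∃ f, cost f = 0) ∧
      (¬(∃ A' ⊆ A, ∑ a ∈ A', ω a = T / 2) → ∀ f, 0 < cost f) := by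
  intro cost
  have hhalf : T / 2 + T / 2 = T := by rw [← two_mul, Nat.two_mul_div_two_of_even heven]
  have hsplit (f : α → Bool) :
      ∑ a ∈ A.filter (fun a => f a = true), ω a +
        ∑ a ∈ A.filter (fun a => f a = false), ω a = T / 2 + T / 2 := by
    rw [hhalf, hT, Finset.sum_filter_eq_true_add_sum_filter_eq_false]
  have hnonneg (f : α → Bool) : 0 ≤ cost f := by
    have := discount_sum_le (hsplit f)
    simp only [cost]
    omega
  have hzero (f : α → Bool) :
      cost f = 0 ↔ ∑ a ∈ A.filter (fun a => f a = true), ω a = T / 2 := by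
    rw [← discount_sum_eq_iff (hsplit f)]
    simp only [cost]
    omega
  have hpartition := Finset.exists_subset_sum_eq_iff_exists_bool A ω (T / 2)
  simp only [← hzero] at hpartition
  refine ⟨hnonneg, hpartition, fun hno f => (hnonneg f).lt_of_ne fun h => hno ?_⟩
  exact hpartition.mpr ⟨f, h.symm⟩
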